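/- arXiv:2006.10840 — 2 statements merged into one kernel-verified Lean document; each statement's English description precedes it below -/
import Mathlib

section
/- Let P and Q be bounded, positive, self-adjoint operators on a complex Hilbert space H, let γ > 0 and let T be a positive even integer with γ‖Q‖ < 1/4; let α ∈ [0, 1/2] and set λ := (γT)^{−1}. There exists a constant c_α < ∞, depending only on α, such that for every v ∈ H: ‖P^{α} R̄_T(Q) v‖_H ≤ c_α (γT)^{−α} ‖(P + λ I)^{α} (Q + λ I)^{−α}‖ · ‖v‖_H. (This is the deterministic bound of Proposition C.2, part 1, with P the population covariance T_s, Q the empirical covariance T_{x,s}, and v = L^s g̃_T.) -/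
/-!
With `λ = (γT)⁻¹`, factor
`P^α R̄_T(Q) = [P^α (P + λ)^(-α)] · [(P + λ)^α (Q + λ)^(-α)] · [(Q + λ)^α R̄_T(Q)]`.
The first factor is a contraction by the functional calculus. The last one is `f(Q)` with
`f(x) = (x + λ)^α r(x)`, where the tail average `r(x)` of `(1 - γx)^t` is at most
`(1 - γx)^(T/2) ≤ exp(-γxT/2)`; subadditivity of `t ↦ t^α` and `s^α e^(-s) ≤ 1` then give
`|f| ≤ 3 λ^α` on the spectrum `[0, ‖Q‖]` of `Q`, so `c_α = 3` works.
-/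

/-- Fractional power `A^r` (for `r : ℝ`) of a bounded operator, via the continuous
functional calculus for self-adjoint operators (real power `x ↦ x ^ r`). -/
noncomputable def opPow {H : Type*} [NormedAddCommGroup H] [InnerProductSpace ℂ H]
    [CompleteSpace H] (A : H →L[ℂ] H) (r : ℝ) : H →L[ℂ] H :=
  cfc (fun x : ℝ => x ^ r) A

/-- The tail-averaged gradient-descent filter operator
`Ḡ_T(Q) = (2/T) ∑_{t=T/2+1}^{T} γ ∑_{k=0}^{t-1} (I - γQ)^k`. -/
noncomputable def Gbar {H : Type*} [NormedAddCommGroup H] [InnerProductSpace ℂ H]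
    [CompleteSpace H] (γ : ℝ) (T : ℕ) (Q : H →L[ℂ] H) : H →L[ℂ] H :=
  (2 / (T : ℂ)) • ∑ t ∈ Finset.Ioc (T / 2) T,
    (γ : ℂ) • ∑ k ∈ Finset.range t, (1 - (γ : ℂ) • Q) ^ k

/-- The tail-averaged gradient-descent residual operator
`R̄_T(Q) = (2/T) ∑_{t=T/2+1}^{T} (I - γQ)^t`. -/
noncomputable def Rbar {H : Type*} [NormedAddCommGroup H] [InnerProductSpace ℂ H]
    [CompleteSpace H] (γ : ℝ) (T : ℕ) (Q : H →L[ℂ] H) : H →L[ℂ] H :=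
  (2 / (T : ℂ)) • ∑ t ∈ Finset.Ioc (T / 2) T, (1 - (γ : ℂ) • Q) ^ t

namespace Real

lemma rpow_le_exp {α s : ℝ} (hα0 : 0 ≤ α) (hα1 : α ≤ 1) (hs : 0 ≤ s) : s ^ α ≤ exp s :=
  calc s ^ α ≤ (1 + s) ^ α := rpow_le_rpow hs (by linarith) hα0
    _ ≤ 1 + α * s := rpow_one_add_le_one_add_mul_self (by linarith) hα0 hα1
    _ ≤ s + 1 := by nlinarith
    _ ≤ exp s := add_one_le_exp s

lemma rpow_mul_one_sub_pow_le {α γ x : ℝ} {m : ℕ} (hα0 : 0 ≤ α) (hα1 : α ≤ 1) (hγ : 0 < γ)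
    (hm : 0 < m) (hx : 0 ≤ x) (hγx : γ * x ≤ 1) :
    x ^ α * (1 - γ * x) ^ m ≤ (γ * m)⁻¹ ^ α := by
  have hγm : 0 < γ * m := by positivity
  have hsplit : x ^ α = (γ * m * x) ^ α * (γ * m)⁻¹ ^ α := by
    rw [← mul_rpow (by positivity) (by positivity)]
    field_simp
  have hdecay : (1 - γ * x) ^ m ≤ exp (-(γ * m * x)) :=
    calc (1 - γ * x) ^ m ≤ exp (-(γ * x)) ^ m := by
          gcongr
          linarith [add_one_le_exp (-(γ * x))]
      _ = exp (-(γ * m * x)) := by rw [← exp_nat_mul]; congr 1; ring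
  calc x ^ α * (1 - γ * x) ^ m ≤ exp (γ * m * x) * (γ * m)⁻¹ ^ α * exp (-(γ * m * x)) := by
        rw [hsplit]
        gcongr
        exact rpow_le_exp hα0 hα1 (by positivity)
    _ = (γ * m)⁻¹ ^ α := by rw [mul_right_comm, ← exp_add, add_neg_cancel, exp_zero, one_mul]

lemma add_inv_rpow_mul_one_sub_pow_le {α γ x : ℝ} {T : ℕ} (hα0 : 0 ≤ α) (hα1 : α ≤ 1)
    (hγ : 0 < γ) (hT : 0 < T) (hTe : Even T) (hx : 0 ≤ x) (hγx : γ * x ≤ 1) :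
    (x + (γ * T)⁻¹) ^ α * (1 - γ * x) ^ (T / 2) ≤ 3 * (γ * T)⁻¹ ^ α := by
  obtain ⟨m, rfl⟩ := hTe
  have hm : 0 < m := by omega
  rw [show (m + m) / 2 = m by omega]
  set l := (γ * ((m + m : ℕ) : ℝ))⁻¹ with hl_def
  have hl : 0 < l := by positivity
  have hγm : (γ * m)⁻¹ ^ α ≤ 2 * l ^ α := by
    rw [show (γ * m)⁻¹ = 2 * l by rw [hl_def]; push_cast; field_simp; ring,
      mul_rpow zero_le_two hl.le]
    gcongr
    exact rpow_le_self_of_one_le one_le_two hα1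
  have hq0 : 0 ≤ (1 - γ * x) ^ m := pow_nonneg (by linarith) m
  have hq1 : (1 - γ * x) ^ m ≤ 1 := pow_le_one₀ (by linarith) (by nlinarith)
  calc (x + l) ^ α * (1 - γ * x) ^ m ≤ (x ^ α + l ^ α) * (1 - γ * x) ^ m := by
        gcongr
        exact rpow_add_le_add_rpow hx hl.le hα0 hα1
    _ = x ^ α * (1 - γ * x) ^ m + l ^ α * (1 - γ * x) ^ m := add_mul _ _ _
    _ ≤ (γ * m)⁻¹ ^ α + l ^ α * 1 := by
        gcongr
        exact rpow_mul_one_sub_pow_le hα0 hα1 hγ hm hx hγx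
    _ ≤ 3 * l ^ α := by linarith

end Real

noncomputable def rbarScalar (γ : ℝ) (T : ℕ) (x : ℝ) : ℝ :=
  2 / T * ∑ t ∈ Finset.Ioc (T / 2) T, (1 - γ * x) ^ t

lemma rbarScalar_nonneg {γ x : ℝ} (T : ℕ) (hγx : γ * x ≤ 1) : 0 ≤ rbarScalar γ T x :=
  mul_nonneg (by positivity) (Finset.sum_nonneg fun t _ => pow_nonneg (by linarith) t)

lemma rbarScalar_le_pow_half {γ x : ℝ} {T : ℕ} (hTe : Even T) (hγx0 : 0 ≤ γ * x)
    (hγx1 : γ * x ≤ 1) : rbarScalar γ T x ≤ (1 - γ * x) ^ (T / 2) := by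
  obtain ⟨m, rfl⟩ := hTe
  rw [rbarScalar, show (m + m) / 2 = m by omega]
  have hsum : ∑ t ∈ Finset.Ioc m (m + m), (1 - γ * x) ^ t ≤ m * (1 - γ * x) ^ m := by
    simpa using Finset.sum_le_card_nsmul (Finset.Ioc m (m + m)) (fun t => (1 - γ * x) ^ t) _
      fun t ht => pow_le_pow_of_le_one (by linarith) (by linarith) (Finset.mem_Ioc.mp ht).1.le
  calc 2 / ((m + m : ℕ) : ℝ) * ∑ t ∈ Finset.Ioc m (m + m), (1 - γ * x) ^ t
      ≤ 2 / ((m + m : ℕ) : ℝ) * (m * (1 - γ * x) ^ m) := by gcongr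
    _ ≤ (1 - γ * x) ^ m := by
        rcases Nat.eq_zero_or_pos m with rfl | hm
        · simp
        · apply le_of_eq
          push_cast
          field_simp
          ring

open Real

section Operator

variable {H : Type*} [NormedAddCommGroup H] [InnerProductSpace ℂ H] [CompleteSpace H]

lemma Rbar_eq_cfc (γ : ℝ) (T : ℕ) {Q : H →L[ℂ] H} (hQ : IsSelfAdjoint Q) :
    Rbar γ T Q = cfc (rbarScalar γ T) Q := by
  have hstep : cfc (fun x : ℝ => 1 - γ * x) Q = 1 - (γ : ℂ) • Q := by
    rw [cfc_sub _ _ Q, cfc_const_one ℝ Q, cfc_const_mul_id γ Q, Complex.coe_smul]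
  have hsum : cfc (fun x : ℝ => ∑ t ∈ Finset.Ioc (T / 2) T, (1 - γ * x) ^ t) Q =
      ∑ t ∈ Finset.Ioc (T / 2) T, (1 - (γ : ℂ) • Q) ^ t := by
    rw [← Finset.sum_fn, cfc_sum _ Q _]
    refine Finset.sum_congr rfl fun t _ => ?_
    rw [cfc_pow _ t Q, hstep]
  unfold rbarScalar
  rw [cfc_const_mul _ _ Q, hsum, Rbar, ← Complex.coe_smul]
  push_cast
  rfl

lemma mem_Icc_norm_of_mem_spectrum {A : H →L[ℂ] H} (hA : A.IsPositive) {x : ℝ}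
    (hx : x ∈ spectrum ℝ A) : x ∈ Set.Icc 0 ‖A‖ :=
  ⟨spectrum_nonneg_of_nonneg ((ContinuousLinearMap.nonneg_iff_isPositive A).mpr hA) hx,
    calc x ≤ ‖x‖ := le_abs_self x
      _ ≤ ‖A‖ * ‖(1 : H →L[ℂ] H)‖ := spectrum.norm_le_norm_mul_of_mem hx
      _ ≤ ‖A‖ := mul_le_of_le_one_right (norm_nonneg A) ContinuousLinearMap.norm_id_le⟩

lemma continuousOn_add_rpow_spectrum {A : H →L[ℂ] H} (hA : A.IsPositive) {l : ℝ} (hl : 0 < l)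
    (β : ℝ) : ContinuousOn (fun x : ℝ => (x + l) ^ β) (spectrum ℝ A) := fun x hx =>
  ((continuous_add_const l).continuousAt.rpow_const
    (Or.inl (by linarith [(mem_Icc_norm_of_mem_spectrum hA hx).1]))).continuousWithinAt

lemma opPow_add_smul_one {A : H →L[ℂ] H} (hA : A.IsPositive) {l : ℝ} (hl : 0 < l) (β : ℝ) :
    opPow (A + l • 1) β = cfc (fun x : ℝ => (x + l) ^ β) A := by
  have := hA.isSelfAdjoint
  have hshift : A + l • 1 = cfc (fun x : ℝ => x + l) A := by
    rw [cfc_add_const l (fun x => x) A, cfc_id' ℝ A, Algebra.algebraMap_eq_smul_one]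
  rw [opPow, hshift]
  refine (cfc_comp' (· ^ β) (· + l) A ?_).symm
  rintro _ ⟨x, hx, rfl⟩
  exact (continuousAt_rpow_const _ _
    (Or.inl (by linarith [(mem_Icc_norm_of_mem_spectrum hA hx).1]))).continuousWithinAt

lemma opPow_add_smul_one_neg_mul_self {A : H →L[ℂ] H} (hA : A.IsPositive) {l : ℝ} (hl : 0 < l)
    (β : ℝ) : opPow (A + l • 1) (-β) * opPow (A + l • 1) β = 1 := by
  have := hA.isSelfAdjoint
  rw [opPow_add_smul_one hA hl, opPow_add_smul_one hA hl,
    ← cfc_mul _ _ A (continuousOn_add_rpow_spectrum hA hl _)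
      (continuousOn_add_rpow_spectrum hA hl _),
    ← cfc_const_one ℝ A]
  refine cfc_congr fun x hx => ?_
  rw [← rpow_add (by linarith [(mem_Icc_norm_of_mem_spectrum hA hx).1]), neg_add_cancel, rpow_zero]

lemma norm_opPow_mul_opPow_add_smul_one_neg_le_one {A : H →L[ℂ] H} (hA : A.IsPositive) {l : ℝ}
    (hl : 0 < l) {α : ℝ} (hα : 0 ≤ α) : ‖opPow A α * opPow (A + l • 1) (-α)‖ ≤ 1 := by
  have := hA.isSelfAdjoint
  rw [opPow_add_smul_one hA hl, opPow, ← cfc_mul _ _ A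
    (continuous_rpow_const hα).continuousOn (continuousOn_add_rpow_spectrum hA hl _)]
  refine norm_cfc_le zero_le_one fun x hx => ?_
  have hx0 := (mem_Icc_norm_of_mem_spectrum hA hx).1
  rw [rpow_neg (by linarith), ← div_eq_mul_inv, ← div_rpow hx0 (by linarith),
    norm_of_nonneg (by positivity)]
  exact rpow_le_one (by positivity) ((div_le_one (by linarith)).mpr (by linarith)) hα

lemma norm_opPow_add_smul_one_mul_Rbar_le {Q : H →L[ℂ] H} (hQ : Q.IsPositive) {α γ : ℝ}
    {T : ℕ} (hα0 : 0 ≤ α) (hα1 : α ≤ 1) (hγ : 0 < γ) (hT : 0 < T) (hTe : Even T)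
    (hγQ : γ * ‖Q‖ ≤ 1) :
    ‖opPow (Q + (γ * T)⁻¹ • 1) α * Rbar γ T Q‖ ≤ 3 * (γ * T)⁻¹ ^ α := by
  have hl : 0 < (γ * T)⁻¹ := by positivity
  have hcont : Continuous (rbarScalar γ T) := by unfold rbarScalar; fun_prop
  rw [opPow_add_smul_one hQ hl, Rbar_eq_cfc γ T hQ.isSelfAdjoint,
    ← cfc_mul _ _ Q (continuousOn_add_rpow_spectrum hQ hl _) hcont.continuousOn]
  refine norm_cfc_le (by positivity) fun x hx => ?_
  obtain ⟨hx0, hxQ⟩ := mem_Icc_norm_of_mem_spectrum hQ hx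
  have hγx : γ * x ≤ 1 := (mul_le_mul_of_nonneg_left hxQ hγ.le).trans hγQ
  rw [norm_of_nonneg (mul_nonneg (by positivity) (rbarScalar_nonneg T hγx))]
  calc (x + (γ * T)⁻¹) ^ α * rbarScalar γ T x
      ≤ (x + (γ * T)⁻¹) ^ α * (1 - γ * x) ^ (T / 2) := by
        gcongr
        exact rbarScalar_le_pow_half hTe (by positivity) hγx
    _ ≤ 3 * (γ * T)⁻¹ ^ α := add_inv_rpow_mul_one_sub_pow_le hα0 hα1 hγ hT hTe hx0 hγx

end Operator

/-- Proposition C.2, part 1, deterministic bound.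
For bounded positive self-adjoint operators `P, Q`, `γ > 0`, a positive even
integer `T` with `γ‖Q‖ < 1/4`, `α ∈ [0, 1/2]`, and `λ = (γT)⁻¹`, there is a
constant `c_α` (depending only on `α`) with
`‖P^α R̄_T(Q) v‖ ≤ c_α (γT)^{-α} ‖(P + λI)^α (Q + λI)^{-α}‖ ‖v‖` for all `v`. -/
theorem estimation_error_deterministic_bound
    {H : Type*} [NormedAddCommGroup H] [InnerProductSpace ℂ H] [CompleteSpace H]
    (α : ℝ) (hα : α ∈ Set.Icc (0 : ℝ) (1 / 2)) :
    ∃ c : ℝ, ∀ (P Q : H →L[ℂ] H), P.IsPositive → Q.IsPositive →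
      ∀ (γ : ℝ) (T : ℕ), 0 < γ → 0 < T → Even T → γ * ‖Q‖ < 1 / 4 →
      ∀ v : H,
        ‖opPow P α (Rbar γ T Q v)‖ ≤
          c * (γ * (T : ℝ)) ^ (-α) *
            ‖opPow (P + ((γ * (T : ℝ))⁻¹ : ℝ) • (1 : H →L[ℂ] H)) α *
              opPow (Q + ((γ * (T : ℝ))⁻¹ : ℝ) • (1 : H →L[ℂ] H)) (-α)‖ * ‖v‖ := by
  obtain ⟨hα0, hα12⟩ := hα
  refine ⟨3, fun P Q hP hQ γ T hγ hT hTe hγQ v => ?_⟩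
  set l := (γ * (T : ℝ))⁻¹
  have hl : 0 < l := by positivity
  set X := opPow (P + l • 1) α * opPow (Q + l • 1) (-α)
  have hfactor : opPow P α * Rbar γ T Q =
      (opPow P α * opPow (P + l • 1) (-α)) * X * (opPow (Q + l • 1) α * Rbar γ T Q) := by
    simp only [X, mul_assoc, ← mul_assoc (opPow (Q + l • 1) (-α)),
      opPow_add_smul_one_neg_mul_self hQ hl, ← mul_assoc (opPow (P + l • 1) (-α)),
      opPow_add_smul_one_neg_mul_self hP hl, one_mul]
  calc ‖(opPow P α * Rbar γ T Q) v‖ ≤ ‖opPow P α * Rbar γ T Q‖ * ‖v‖ :=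
        ContinuousLinearMap.le_opNorm _ _
    _ ≤ 1 * ‖X‖ * (3 * l ^ α) * ‖v‖ := by
        rw [hfactor]
        gcongr
        refine norm_mul₃_le.trans ?_
        gcongr
        · exact norm_opPow_mul_opPow_add_smul_one_neg_le_one hP hl hα0
        · exact norm_opPow_add_smul_one_mul_Rbar_le hQ hα0 (by linarith) hγ hT hTe (by linarith)
    _ = 3 * (γ * T) ^ (-α) * ‖X‖ * ‖v‖ := by
        rw [rpow_neg (by positivity), ← inv_rpow (by positivity)]
        ring
end

section
/- Let Q be a bounded, positive, self-adjoint operator on a complex Hilbert space H, let γ > 0 and let T be a positive even integer with γ‖Q‖ ≤ 1, and let p ≥ 0. Then ‖Q^{p} R̄_T(Q)‖ ≤ (2p/e)^{p} (γT)^{−p} (with the convention 0^0 = 1); in particular ‖R̄_T(Q)‖ ≤ 1. -/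
/-!
On the spectrum of `Q`, which lies in `[0, 1/γ]`, the operator `R̄_T(Q)` acts as
`r(x) = (2/T) ∑_{T/2 < t ≤ T} (1 - γx)^t`, a mean of `T/2` terms each at most
`(1 - γx)^{T/2} ≤ exp(-γTx/2)`. Since `y e^{-y} ≤ e^{-1}`, the function `x^p e^{-cx}` is at most
`(p/(ce))^p`, which for `c = γT/2` is `(2p/e)^p (γT)^{-p}`. The continuous functional calculus
bounds the norm of `Q^p R̄_T(Q)` by the supremum of `x^p r(x)` over the spectrum; `p = 0` gives
`‖R̄_T(Q)‖ ≤ 1`.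
-/

open Real Finset

noncomputable def tailAvgPow (T : ℕ) (b : ℝ) : ℝ :=
  2 / T * ∑ t ∈ Ioc (T / 2) T, b ^ t

@[fun_prop]
lemma continuous_tailAvgPow (T : ℕ) : Continuous (tailAvgPow T) := by
  unfold tailAvgPow
  fun_prop

lemma tailAvgPow_nonneg (T : ℕ) {b : ℝ} (hb : 0 ≤ b) : 0 ≤ tailAvgPow T b := by
  unfold tailAvgPow
  positivity

lemma tailAvgPow_le_pow_half {T : ℕ} (hT : Even T) {b : ℝ} (hb₀ : 0 ≤ b) (hb₁ : b ≤ 1) :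
    tailAvgPow T b ≤ b ^ (T / 2) := by
  obtain ⟨m, rfl⟩ := hT
  have hhalf : (m + m) / 2 = m := by omega
  unfold tailAvgPow
  rw [hhalf]
  calc 2 / ((m + m : ℕ) : ℝ) * ∑ t ∈ Ioc m (m + m), b ^ t
      ≤ 2 / ((m + m : ℕ) : ℝ) * ∑ _t ∈ Ioc m (m + m), b ^ m := by
        gcongr 2 / _ * ?_
        exact sum_le_sum fun t ht => pow_le_pow_of_le_one hb₀ hb₁ (mem_Ioc.1 ht).1.le
    _ ≤ b ^ m := by
        rcases Nat.eq_zero_or_pos m with rfl | hm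
        · simp
        · apply le_of_eq
          rw [sum_const, Nat.card_Ioc, Nat.add_sub_cancel, nsmul_eq_mul, Nat.cast_add, ← two_mul]
          field_simp

lemma rpow_mul_exp_neg_mul_le {x c p : ℝ} (hx : 0 ≤ x) (hc : 0 < c) (hp : 0 ≤ p) :
    x ^ p * exp (-(c * x)) ≤ (p / (c * exp 1)) ^ p := by
  rcases hp.eq_or_lt with rfl | hp
  · simpa using mul_nonneg hc.le hx
  -- `y e^{-y} ≤ e^{-1}` at `y = cx/p`, raised to the power `p`
  have hy : x * exp (-(c * x / p)) ≤ p / (c * exp 1) := by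
    have := mul_exp_neg_le_exp_neg_one (c * x / p)
    rw [exp_neg 1] at this
    have key : x * exp (-(c * x / p)) = p / c * (c * x / p * exp (-(c * x / p))) := by
      field_simp
    rw [key, div_mul_eq_div_div, ← mul_one_div (p / c)]
    gcongr
    simpa using this
  calc x ^ p * exp (-(c * x)) = (x * exp (-(c * x / p))) ^ p := by
        rw [mul_rpow hx (exp_pos _).le, ← exp_mul]
        field_simp
    _ ≤ (p / (c * exp 1)) ^ p := rpow_le_rpow (by positivity) hy hp.le

lemma abs_rpow_mul_tailAvgPow_le {γ x p : ℝ} {T : ℕ} (hγ : 0 < γ) (hT : 0 < T)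
    (hTeven : Even T) (hp : 0 ≤ p) (hx₀ : 0 ≤ x) (hx₁ : γ * x ≤ 1) :
    |x ^ p * tailAvgPow T (1 - γ * x)| ≤ (2 * p / exp 1) ^ p * (γ * T) ^ (-p) := by
  obtain ⟨m, rfl⟩ := hTeven
  have hm : 0 < m := by omega
  have hb₀ : 0 ≤ 1 - γ * x := sub_nonneg.2 hx₁
  have hb₁ : 1 - γ * x ≤ 1 := sub_le_self _ (mul_nonneg hγ.le hx₀)
  have hγT : 0 < γ * (m + m : ℕ) := by positivity
  calc |x ^ p * tailAvgPow (m + m) (1 - γ * x)|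
      = x ^ p * tailAvgPow (m + m) (1 - γ * x) :=
        abs_of_nonneg (mul_nonneg (rpow_nonneg hx₀ p) (tailAvgPow_nonneg _ hb₀))
    _ ≤ x ^ p * (1 - γ * x) ^ m := by
        gcongr
        simpa [show (m + m) / 2 = m by omega] using
          tailAvgPow_le_pow_half ⟨m, rfl⟩ hb₀ hb₁
    _ ≤ x ^ p * exp (-(γ * m * x)) := by
        gcongr
        calc (1 - γ * x) ^ m ≤ exp (-(γ * x)) ^ m := by gcongr; exact one_sub_le_exp_neg _
          _ = exp (-(γ * m * x)) := by rw [← exp_nat_mul]; ring_nf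
    _ ≤ (p / (γ * m * exp 1)) ^ p := rpow_mul_exp_neg_mul_le hx₀ (by positivity) hp
    _ = (2 * p / exp 1) ^ p * (γ * (m + m : ℕ)) ^ (-p) := by
        rw [rpow_neg hγT.le, ← inv_rpow hγT.le, ← mul_rpow (by positivity) (by positivity),
          Nat.cast_add, ← two_mul]
        field_simp

section Operator

variable {H : Type*} [NormedAddCommGroup H] [InnerProductSpace ℂ H] [CompleteSpace H]

lemma opPow_zero {Q : H →L[ℂ] H} (hQ : IsSelfAdjoint Q) : opPow Q 0 = 1 := by
  simp only [opPow, rpow_zero]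
  exact cfc_const_one ℝ Q

lemma Rbar_eq_cfc_tailAvgPow (γ : ℝ) (T : ℕ) {Q : H →L[ℂ] H} (hQ : IsSelfAdjoint Q) :
    Rbar γ T Q = cfc (fun x : ℝ => tailAvgPow T (1 - γ * x)) Q := by
  have hstep : cfc (fun x : ℝ => 1 - γ * x) Q = 1 - (γ : ℂ) • Q := by
    rw [cfc_sub (fun _ => (1 : ℝ)) (fun x => γ * x) Q, cfc_const_one ℝ Q, cfc_const_mul_id γ Q,
      Complex.coe_smul]
  have hpow (t : ℕ) : (1 - (γ : ℂ) • Q) ^ t = cfc (fun x : ℝ => (1 - γ * x) ^ t) Q := by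
    rw [cfc_pow (fun x : ℝ => 1 - γ * x) t Q, hstep]
  have hsum : (fun x : ℝ => ∑ t ∈ Ioc (T / 2) T, (1 - γ * x) ^ t) =
      ∑ t ∈ Ioc (T / 2) T, fun x : ℝ => (1 - γ * x) ^ t := by
    ext
    simp
  unfold tailAvgPow
  rw [cfc_const_mul _ _ Q, hsum, cfc_sum _ Q, Rbar]
  simp_rw [← hpow, ← Complex.coe_smul]
  push_cast
  rfl

lemma le_norm_of_mem_spectrum {Q : H →L[ℂ] H} {x : ℝ} (hx : x ∈ spectrum ℝ Q) : x ≤ ‖Q‖ :=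
  calc x ≤ ‖Q‖ * ‖(1 : H →L[ℂ] H)‖ :=
        (le_norm_self x).trans (spectrum.norm_le_norm_mul_of_mem hx)
    _ ≤ ‖Q‖ := mul_le_of_le_one_right (norm_nonneg Q) ContinuousLinearMap.norm_id_le

theorem norm_opPow_mul_Rbar_le {Q : H →L[ℂ] H} (hQ : 0 ≤ Q) {γ : ℝ} {T : ℕ}
    (hγ : 0 < γ) (hT : 0 < T) (hTeven : Even T) (hγQ : γ * ‖Q‖ ≤ 1) {p : ℝ} (hp : 0 ≤ p) :
    ‖opPow Q p * Rbar γ T Q‖ ≤ (2 * p / exp 1) ^ p * (γ * T) ^ (-p) := by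
  rw [opPow, Rbar_eq_cfc_tailAvgPow γ T (.of_nonneg hQ), ← cfc_mul _ _ Q]
  refine norm_cfc_le (by positivity) fun x hx => ?_
  have hx₀ : 0 ≤ x := spectrum_nonneg_of_nonneg hQ hx
  have hx₁ : γ * x ≤ 1 := (mul_le_mul_of_nonneg_left (le_norm_of_mem_spectrum hx) hγ.le).trans hγQ
  exact abs_rpow_mul_tailAvgPow_le hγ hT hTeven hp hx₀ hx₁

end Operator

/-- spectral residual bound for the tail-averaged GD filter;
Lemma 3 of Mücke–Neu–Rosasco with K = 3.
For a bounded positive self-adjoint operator `Q`, `γ > 0`, a positive even integer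
`T` with `γ‖Q‖ ≤ 1`, and `p ≥ 0`:
`‖Q^p R̄_T(Q)‖ ≤ (2p/e)^p (γT)^{-p}` (with `0^0 = 1`), and `‖R̄_T(Q)‖ ≤ 1`. -/
theorem residual_operator_bound
    {H : Type*} [NormedAddCommGroup H] [InnerProductSpace ℂ H] [CompleteSpace H]
    (Q : H →L[ℂ] H) (hQ : Q.IsPositive)
    (γ : ℝ) (T : ℕ) (hγ : 0 < γ) (hT : 0 < T) (hTeven : Even T)
    (hγQ : γ * ‖Q‖ ≤ 1) (p : ℝ) (hp : 0 ≤ p) :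
    ‖opPow Q p * Rbar γ T Q‖ ≤
        (2 * p / Real.exp 1) ^ p * (γ * (T : ℝ)) ^ (-p) ∧
      ‖Rbar γ T Q‖ ≤ 1 := by
  have hQ₀ : 0 ≤ Q := (ContinuousLinearMap.nonneg_iff_isPositive Q).2 hQ
  refine ⟨norm_opPow_mul_Rbar_le hQ₀ hγ hT hTeven hγQ hp, ?_⟩
  simpa [opPow_zero (.of_nonneg hQ₀)] using norm_opPow_mul_Rbar_le hQ₀ hγ hT hTeven hγQ le_rfl
end
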